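/- arXiv:2403.13203 — 3 statements merged into one kernel-verified Lean document; each statement's English description precedes it below -/
import Mathlib

section
/- For integer n ≥ 4 and real r > sqrt(2), the equation r^2(4-n) + (n-1)*(r^2(n-1)/(r^2+n-4)) = 15 has no real solution r, i.e., the QPEM cannot exactly match the sixth marginal moment E[z_i^6] = 15 of the standard normal distribution in dimensions n ≥ 4. -/
/-- For `n ≥ 4` and `r > √2`, the QPEM cannot exactly match the sixth marginal moment
`E[z_i^6] = 15` of the standard normal distribution. -/
theorem qpem_sixth_moment_unmatchable (n : ℕ) (hn : 4 ≤ n) (r : ℝ) (hr : Real.sqrt 2 < r) :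
    r ^ 2 * (4 - (n : ℝ)) + ((n : ℝ) - 1) * (r ^ 2 * ((n : ℝ) - 1) / (r ^ 2 + (n : ℝ) - 4))
      ≠ 15 := by
  intro h
  have hn' : (4 : ℝ) ≤ (n : ℝ) := by exact_mod_cast hn
  have hs : 2 < r ^ 2 := by
    nlinarith [Real.sq_sqrt (show (0:ℝ) ≤ 2 by norm_num), Real.sqrt_nonneg 2]
  have hden : 0 < r ^ 2 + (n : ℝ) - 4 := by linarith
  have hden' : r ^ 2 + (n : ℝ) - 4 ≠ 0 := ne_of_gt hden
  field_simp at h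
  rcases eq_or_lt_of_le hn with h4 | h5
  · have : (n : ℝ) = 4 := by exact_mod_cast h4.symm
    rw [this] at h
    nlinarith
  · have h5' : (5 : ℝ) ≤ (n : ℝ) := by exact_mod_cast h5
    nlinarith [sq_nonneg (((n : ℝ) - 4) * r ^ 2 - 3 * ((n : ℝ) - 5)), hs, h5']
end

section
/- Given real numbers γ and κ with κ > 3γ^2/4 and κ - γ^2 ≠ 0, define c1 = γ/2 + sqrt(κ - 3γ^2/4), c2 = γ/2 - sqrt(κ - 3γ^2/4), w1 = 1/(c1(c1-c2)), w2 = -1/(c2(c1-c2)). Then w1*c1 + w2*c2 = 0, w1*c1^2 + w2*c2^2 = 1, w1*c1^3 + w2*c2^3 = γ, and w1*c1^4 + w2*c2^4 = κ. -/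
lemma hpem_aux (γ κ s : ℝ) (hs0 : 0 < s) (hs2 : s ^ 2 = κ - 3 * γ ^ 2 / 4)
    (hc1 : γ / 2 + s ≠ 0) (hc2 : γ / 2 - s ≠ 0) :
    (1 / ((γ/2+s) * ((γ/2+s) - (γ/2-s)))) * (γ/2+s) + (-1 / ((γ/2-s) * ((γ/2+s) - (γ/2-s)))) * (γ/2-s) = 0 ∧
    (1 / ((γ/2+s) * ((γ/2+s) - (γ/2-s)))) * (γ/2+s)^2 + (-1 / ((γ/2-s) * ((γ/2+s) - (γ/2-s)))) * (γ/2-s)^2 = 1 ∧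
    (1 / ((γ/2+s) * ((γ/2+s) - (γ/2-s)))) * (γ/2+s)^3 + (-1 / ((γ/2-s) * ((γ/2+s) - (γ/2-s)))) * (γ/2-s)^3 = γ ∧
    (1 / ((γ/2+s) * ((γ/2+s) - (γ/2-s)))) * (γ/2+s)^4 + (-1 / ((γ/2-s) * ((γ/2+s) - (γ/2-s)))) * (γ/2-s)^4 = κ := by
  have hd : (γ/2+s) - (γ/2-s) ≠ 0 := by intro h; nlinarith
  have hA : (γ/2+s) * ((γ/2+s) - (γ/2-s)) ≠ 0 := mul_ne_zero hc1 hd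
  have hB : (γ/2-s) * ((γ/2+s) - (γ/2-s)) ≠ 0 := mul_ne_zero hc2 hd
  refine ⟨?_, ?_, ?_, ?_⟩ <;>
  · rw [div_mul_eq_mul_div, div_mul_eq_mul_div, div_add_div _ _ hA hB,
      div_eq_iff (mul_ne_zero hA hB)]
    first
    | ring1
    | linear_combination (γ ^ 2 * s ^ 2 - 4 * s ^ 4) * hs2

/-- HPEM two-point construction matches the first four standardized marginal moments. -/
theorem hpem_moment_matching (γ κ : ℝ) (h1 : 3 * γ ^ 2 / 4 < κ) (h2 : κ - γ ^ 2 ≠ 0) :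
    let c1 : ℝ := γ / 2 + Real.sqrt (κ - 3 * γ ^ 2 / 4)
    let c2 : ℝ := γ / 2 - Real.sqrt (κ - 3 * γ ^ 2 / 4)
    let w1 : ℝ := 1 / (c1 * (c1 - c2))
    let w2 : ℝ := -1 / (c2 * (c1 - c2))
    w1 * c1 + w2 * c2 = 0 ∧
    w1 * c1 ^ 2 + w2 * c2 ^ 2 = 1 ∧
    w1 * c1 ^ 3 + w2 * c2 ^ 3 = γ ∧
    w1 * c1 ^ 4 + w2 * c2 ^ 4 = κ := by
  intro c1 c2 w1 w2
  have hs0 : 0 < Real.sqrt (κ - 3 * γ ^ 2 / 4) := Real.sqrt_pos.mpr (by linarith)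
  have hs2 : Real.sqrt (κ - 3 * γ ^ 2 / 4) ^ 2 = κ - 3 * γ ^ 2 / 4 :=
    Real.sq_sqrt (by linarith)
  have hprod : c1 * c2 = γ ^ 2 - κ := by
    show (γ / 2 + _) * (γ / 2 - _) = γ ^ 2 - κ
    nlinarith [hs2]
  have hc1 : c1 ≠ 0 := by
    intro h; apply h2; rw [h, zero_mul] at hprod; linarith
  have hc2 : c2 ≠ 0 := by
    intro h; apply h2; rw [h, mul_zero] at hprod; linarith
  exact hpem_aux γ κ _ hs0 hs2 hc1 hc2
end

section
/- For HPEM with standard normal inputs and n ≥ 2 dimensions, the fourth-order cross moment estimate sum_i W_i * S_{i,j1}^2 * S_{i,j2}^2 equals 0 for distinct coordinates j1 ≠ j2, whereas the true cross moment E[z_{j1}^2 z_{j2}^2] of the uncorrelated standard normal distribution equals 1. -/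
open MeasureTheory ProbabilityTheory Real Filter
open scoped ENNReal NNReal

lemma sq_mul_exp_integral : ∫ x : ℝ, x ^ 2 * Real.exp (-(1/2 : ℝ) * x ^ 2) = Real.sqrt (2 * π) := by
  have hb : (0:ℝ) < 1/2 := by norm_num
  have hint2 : Integrable fun x : ℝ => x ^ 2 * Real.exp (-(1/2:ℝ) * x ^ 2) := by
    have := integrable_rpow_mul_exp_neg_mul_sq hb (s := 2) (by norm_num)
    convert this using 2 with x
    rw [show ((2:ℝ) = ((2:ℕ):ℝ)) by norm_num, Real.rpow_natCast]
  have hint1 : Integrable fun x : ℝ => Real.exp (-(1/2:ℝ) * x ^ 2) :=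
    integrable_exp_neg_mul_sq hb
  have hderiv : ∀ x : ℝ, HasDerivAt (fun x : ℝ => -x * Real.exp (-(1/2:ℝ) * x ^ 2))
      (x ^ 2 * Real.exp (-(1/2:ℝ) * x ^ 2) - Real.exp (-(1/2:ℝ) * x ^ 2)) x := by
    intro x
    have h1 : HasDerivAt (fun x : ℝ => -(1/2:ℝ) * x ^ 2) (-(1/2:ℝ) * (2 * x ^ 1)) x := by
      exact_mod_cast (hasDerivAt_pow 2 x).const_mul (-(1/2:ℝ))
    have h3 : HasDerivAt (fun x : ℝ => -x) (-1) x := (hasDerivAt_id x).neg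
    have := h3.mul h1.exp
    exact this.congr_deriv (by ring)
  have htend : Tendsto (fun x : ℝ => -x * Real.exp (-(1/2:ℝ) * x ^ 2)) (Filter.cocompact ℝ) (nhds 0) := by
    have h : Tendsto (fun x : ℝ => |x| * Real.exp (-(1/2:ℝ) * x ^ 2)) (Filter.cocompact ℝ) (nhds 0) := by
      simpa [Real.rpow_one] using tendsto_rpow_abs_mul_exp_neg_mul_sq_cocompact hb 1
    rw [tendsto_zero_iff_norm_tendsto_zero]
    convert h using 2 with x
    rw [norm_mul, norm_neg, Real.norm_eq_abs, Real.norm_eq_abs, abs_of_pos (Real.exp_pos _)]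
  have hzero : ∫ x : ℝ, (x ^ 2 * Real.exp (-(1/2:ℝ) * x ^ 2) - Real.exp (-(1/2:ℝ) * x ^ 2)) = 0 - 0 :=
    integral_of_hasDerivAt_of_tendsto hderiv (hint2.sub hint1)
      (htend.mono_left (by rw [cocompact_eq_atBot_atTop]; exact le_sup_left))
      (htend.mono_left (by rw [cocompact_eq_atBot_atTop]; exact le_sup_right))
  rw [integral_sub hint2 hint1, show (0:ℝ) - 0 = 0 by norm_num, sub_eq_zero] at hzero
  rw [hzero, integral_gaussian (1/2 : ℝ)]
  norm_num
  ring

lemma gaussian_second_moment : ∫ x : ℝ, x ^ 2 ∂(gaussianReal 0 1) = 1 := by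
  rw [gaussianReal_of_var_ne_zero 0 one_ne_zero]
  have hpdf : gaussianPDF 0 1 = fun x => ((gaussianPDFReal 0 1 x).toNNReal : ℝ≥0∞) := rfl
  rw [hpdf, integral_withDensity_eq_integral_smul
    ((measurable_gaussianPDFReal 0 1).real_toNNReal) (fun x : ℝ => x ^ 2)]
  have : ∀ x : ℝ, (gaussianPDFReal 0 1 x).toNNReal • (x ^ 2) =
      (Real.sqrt (2 * π))⁻¹ * (x ^ 2 * Real.exp (-(1/2:ℝ) * x ^ 2)) := by
    intro x
    rw [NNReal.smul_def, Real.coe_toNNReal _ (gaussianPDFReal_nonneg _ _ _), gaussianPDFReal]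
    simp only [NNReal.coe_one, mul_one, sub_zero, smul_eq_mul]
    ring_nf
  simp_rw [this]
  rw [integral_const_mul, sq_mul_exp_integral]
  rw [inv_mul_cancel₀ (by positivity)]

/-- HPEM sigma points have at most one nonzero coordinate, so the estimated fourth-order
cross moment is 0, while the true cross moment of i.i.d. standard normals equals 1. -/
theorem hpem_cross_moment_error (n : ℕ) (hn : 2 ≤ n) (N : ℕ)
    (S : Fin N → Fin n → ℝ) (W : Fin N → ℝ)
    (hS : ∀ i, ∀ j1 j2 : Fin n, j1 ≠ j2 → S i j1 = 0 ∨ S i j2 = 0)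
    (j1 j2 : Fin n) (hj : j1 ≠ j2) :
    (∑ i, W i * ((S i j1) ^ 2 * (S i j2) ^ 2) = 0) ∧
    (∫ z : Fin n → ℝ, (z j1) ^ 2 * (z j2) ^ 2
        ∂(Measure.pi fun _ : Fin n => gaussianReal 0 1) = 1) := by
  constructor
  · refine Finset.sum_eq_zero fun i _ => ?_
    rcases hS i j1 j2 hj with h | h <;> simp [h]
  · set f : Fin n → ℝ → ℝ :=
      fun j x => (if j = j1 then x ^ 2 else 1) * (if j = j2 then x ^ 2 else 1) with hf
    have key := @MeasureTheory.integral_fintype_prod_eq_prod ℝ (Fin n) _ _ (fun _ => ℝ) f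
      _ (fun _ => gaussianReal 0 1) (fun _ => inferInstanceAs (SigmaFinite (gaussianReal 0 1)))
    have hprod : ∀ z : Fin n → ℝ, ∏ i, f i (z i) = (z j1) ^ 2 * (z j2) ^ 2 := by
      intro z
      simp only [hf, Finset.prod_mul_distrib]
      rw [Finset.prod_ite_eq' Finset.univ j1 (fun i => (z i) ^ 2),
        Finset.prod_ite_eq' Finset.univ j2 (fun i => (z i) ^ 2)]
      simp
    calc ∫ z : Fin n → ℝ, (z j1) ^ 2 * (z j2) ^ 2
          ∂(Measure.pi fun _ : Fin n => gaussianReal 0 1)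
        = ∫ z : Fin n → ℝ, ∏ i, f i (z i)
          ∂(Measure.pi fun _ : Fin n => gaussianReal 0 1) := by
          congr 1; funext z; rw [hprod]
      _ = ∏ i, ∫ x : ℝ, f i x ∂(gaussianReal 0 1) := key
      _ = 1 := by
          refine Finset.prod_eq_one fun i _ => ?_
          rcases eq_or_ne i j1 with rfl | h1
          · simp only [hf, if_pos rfl, if_neg hj, mul_one]
            exact gaussian_second_moment
          · rcases eq_or_ne i j2 with rfl | h2
            · simp only [hf, if_neg h1, if_pos rfl, one_mul]
              exact gaussian_second_moment
            · simp only [hf, if_neg h1, if_neg h2, mul_one]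
              simp
end
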